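/- If M is a minimal unsatisfiable subset (MUS) of an inconsistent finite knowledge base KB, then M hits every minimal correction set (MCS) of KB, i.e., M ∩ C ≠ ∅ for every MCS C of KB. -/
import Mathlib

/-- A possible world: a truth assignment to the variables. -/
abbrev World (V : Type*) := V → Bool

/-- A propositional formula, represented semantically by its truth value in each world. -/
abbrev Fml (V : Type*) := World V → Bool

/-- A finite set of formulae is satisfiable if some world satisfies all its formulae. -/
def Sat {V : Type*} (S : Finset (Fml V)) : Prop := ∃ ω : World V, ∀ ψ ∈ S, ψ ω = true

/-- `M` is a minimal unsatisfiable subset (MUS) of `KB`. -/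
def IsMUS {V : Type*} (KB M : Finset (Fml V)) : Prop :=
  M ⊆ KB ∧ ¬ Sat M ∧ ∀ M' ⊂ M, Sat M'

/-- `C` is a minimal correction set (MCS) of `KB`. -/
def IsMCS {V : Type*} [Fintype V] [DecidableEq V] (KB C : Finset (Fml V)) : Prop :=
  C ⊆ KB ∧ Sat (KB \ C) ∧ ∀ C' ⊂ C, ¬ Sat (KB \ C')

/-- If `M` is an MUS of an inconsistent finite knowledge base `KB`, then `M` hits every
MCS `C` of `KB`, i.e. `M ∩ C ≠ ∅`. -/
theorem stmt2 {V : Type*} [Fintype V] [DecidableEq V] (KB M : Finset (Fml V))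
    (hKB : ¬ Sat KB) (hM : IsMUS KB M) :
    ∀ C : Finset (Fml V), IsMCS KB C → (M ∩ C).Nonempty := by
  intro C hC
  by_contra h
  rw [Finset.not_nonempty_iff_eq_empty] at h
  obtain ⟨hMsub, hMunsat, _⟩ := hM
  obtain ⟨_, ⟨ω, hω⟩, _⟩ := hC
  exact hMunsat ⟨ω, fun ψ hψ => hω ψ (Finset.mem_sdiff.mpr ⟨hMsub hψ,
    fun hc => Finset.eq_empty_iff_forall_notMem.mp h ψ (Finset.mem_inter.mpr ⟨hψ, hc⟩)⟩)⟩
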